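/- Let P be a Łukasiewicz path and T = τ(P). Then the right lodestar of T is the internal node of T corresponding to the last up-step of P under τ; in particular, if the last up-step of P has degree b, then the right lodestar of T has degree b+1. -/

import Mathlib

/-! ## Plane trees -/

/-- A plane tree: a root together with an ordered (left-to-right) list of subtrees.
A node is a *leaf* if it has no children, and *internal* otherwise. -/
inductive PTree : Type where
  | node : List PTree → PTree


namespace Luka

/-! ## Łukasiewicz paths

A path is encoded by its list of step increments: the step `(1,k)` (an up-step `U_k` of
degree `k`) is encoded by `k : ℤ` with `k ≥ 0`, and the down step `D = (1,-1)` by `-1`. -/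

/-- `P` is a Łukasiewicz path: it is nonempty, uses steps `(1,k)` with `k ≥ -1`,
stays (weakly) above the `x`-axis before its last step, and ends at height `-1`
(so that it goes strictly below the axis only at the last step, which is forced
to be the down-step `D`). -/
def IsLukas (P : List ℤ) : Prop :=
  P ≠ [] ∧ (∀ s ∈ P, -1 ≤ s) ∧ (∀ n, n < P.length → 0 ≤ (P.take n).sum) ∧ P.sum = -1

/-- The degrees of the up-steps of `P`, from left to right (the *profile* of `P`). -/
def upDegs (P : List ℤ) : List ℕ := (P.filter (fun s => 0 ≤ s)).map Int.toNat

/-- The profile multiset `𝔐(P)`: the multiset of degrees of the up-steps of `P`. -/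
def profileM (P : List ℤ) : Multiset ℕ := (upDegs P : Multiset ℕ)

/-- The degree of the first up-step of `P`, if any. -/
def firstUp? (P : List ℤ) : Option ℕ := (upDegs P).head?

/-- The degree of the last up-step of `P`, if any. -/
def lastUp? (P : List ℤ) : Option ℕ := (upDegs P).getLast?

/-- Auxiliary: starting from height `h`, record the starting height of every up-step. -/
def areaVecAux : ℤ → List ℤ → List ℤ
  | _, [] => []
  | h, s :: rest => (if 0 ≤ s then [h] else []) ++ areaVecAux (h + s) rest

/-- The area vector `Area(P)`: the `i`-th entry is the `y`-coordinate of the starting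
point of the `i`-th up-step of `P`. -/
def areaVec (P : List ℤ) : List ℤ := areaVecAux 0 P

/-- `area(P)`: the sum of the entries of the area vector (entries of a Łukasiewicz
path are nonnegative, so taking `Int.toNat` entrywise is harmless). -/
def area (P : List ℤ) : ℕ := ((areaVec P).map Int.toNat).sum

/-- Auxiliary computation of the depth values: `cur` is the depth value of the previous
step (`0` initially), and `stack` holds the pending depth values of the future matching
down-steps (top of the stack = value for the next matching down-step to come).
Reading an up-step `U_k` whose value is `cur` (inherited from the previous step) pushes
the values `cur+1, …, cur+k` for its `k` matching down-steps (its first matching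
down-step, which crosses its topmost interior level, gets `cur+1`, etc.); reading a
down-step pops its value.  The list returned records the value `d_i` of each up-step,
from left to right. -/
def depthVecAux : ℕ → List ℕ → List ℤ → List ℕ
  | _, _, [] => []
  | cur, stack, s :: rest =>
    if 0 ≤ s then
      cur :: depthVecAux cur ((List.range s.toNat).map (fun i => cur + i + 1) ++ stack) rest
    else
      match stack with
      | [] => depthVecAux cur [] rest
      | v :: st => depthVecAux v st rest

/-- The depth vector `Depth(P)`: the values `d_i` at the up-steps of `P`, left to right. -/
def depthVec (P : List ℤ) : List ℕ := depthVecAux 0 [] P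

/-- `depth(P)`: the sum of the entries of the depth vector. -/
def depth (P : List ℤ) : ℕ := (depthVec P).sum

/-- `P ∈ 𝓛_M`. -/
def MemL (M : Multiset ℕ) (P : List ℤ) : Prop := IsLukas P ∧ profileM P = M

/-- `P ∈ 𝓛_{a,M}`: first up-step of degree `a`, profile multiset `M ⊎ {a}`. -/
def MemLa (a : ℕ) (M : Multiset ℕ) (P : List ℤ) : Prop :=
  IsLukas P ∧ firstUp? P = some a ∧ profileM P = a ::ₘ M

/-- `P ∈ 𝓛_{M,b}`: last up-step of degree `b`, profile multiset `M ⊎ {b}`. -/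
def MemLb (M : Multiset ℕ) (b : ℕ) (P : List ℤ) : Prop :=
  IsLukas P ∧ lastUp? P = some b ∧ profileM P = b ::ₘ M

/-- `P ∈ 𝓛_{a,M,b}`: first up-step of degree `a`, last up-step of degree `b`,
profile multiset `M ⊎ {a, b}`. -/
def MemLab (a : ℕ) (M : Multiset ℕ) (b : ℕ) (P : List ℤ) : Prop :=
  IsLukas P ∧ firstUp? P = some a ∧ lastUp? P = some b ∧ profileM P = a ::ₘ b ::ₘ M

/-! ## Plane-tree statistics -/

/-- The (ordered) children of the root of a plane tree. -/
def children : PTree → List PTree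
  | .node ts => ts

/-- The degree of (the root of) a plane tree: its number of children. -/
def numChildren (t : PTree) : ℕ := (children t).length

mutual
/-- Number of internal nodes of a plane tree. -/
def internCount : PTree → ℕ
  | .node [] => 0
  | .node (t :: ts) => 1 + internCountL (t :: ts)
def internCountL : List PTree → ℕ
  | [] => 0
  | t :: ts => internCount t + internCountL ts
end

mutual
/-- `lthornT T` = the sum of `lthorn(u)` over all internal nodes `u` of `T`, where
`lthorn(u)` is the number of descending edges of strict ancestors `v` of `u` lying to
the left of the path from `v` to `u`.  (Every internal node of the subtree rooted at
the `i`-th child (0-indexed) of a node gains `i` left thorns from that node.) -/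
def lthornT : PTree → ℕ
  | .node ts => lthornL 0 ts
def lthornL : ℕ → List PTree → ℕ
  | _, [] => 0
  | i, t :: ts => lthornT t + i * internCount t + lthornL (i + 1) ts
end

mutual
/-- `rthornT T` = the sum of `rthorn(u)` over all internal nodes `u` of `T`, where
`rthorn(u)` is the number of descending edges of strict ancestors `v` of `u` lying to
the right of the path from `v` to `u`. -/
def rthornT : PTree → ℕ
  | .node ts => rthornL ts
def rthornL : List PTree → ℕ
  | [] => 0
  | t :: ts => rthornT t + ts.length * internCount t + rthornL ts
end

mutual
/-- The list of the values `lthorn(u)` for the internal nodes `u` of `T`, in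
contour-walk (preorder) order. -/
def lthornList : PTree → List ℕ
  | .node [] => []
  | .node (t :: ts) => 0 :: lthornLL 0 (t :: ts)
def lthornLL : ℕ → List PTree → List ℕ
  | _, [] => []
  | i, t :: ts => (lthornList t).map (· + i) ++ lthornLL (i + 1) ts
end

mutual
/-- The list of the values `rthorn(u)` for the internal nodes `u` of `T`, in
contour-walk (preorder) order. -/
def rthornList : PTree → List ℕ
  | .node [] => []
  | .node (t :: ts) => 0 :: rthornLL (t :: ts)
def rthornLL : List PTree → List ℕ
  | [] => []
  | t :: ts => (rthornList t).map (· + ts.length) ++ rthornLL ts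
end

/-! ## The bijections `λ` and `τ` -/

mutual
/-- `λ`: record each node of the tree at its first visit in the left-to-right contour
walk: `U_k` (i.e. `k`) for an internal node with `k+1` children, `D` (i.e. `-1`)
for a leaf. -/
def lambdaT : PTree → List ℤ
  | .node ts => ((ts.length : ℤ) - 1) :: lambdaL ts
def lambdaL : List PTree → List ℤ
  | [] => []
  | t :: ts => lambdaT t ++ lambdaL ts
end

/-- Auxiliary for `τ`: reading the path from right to left, maintain the stack of the
already-built subtrees (in left-to-right order); a down-step `D` creates a leaf and an
up-step `U_k` grabs the `k+1` topmost subtrees as its children.  This builds the same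
tree as the left-to-right "leftmost bud" construction. -/
def tauStack (P : List ℤ) : List PTree :=
  P.foldr (fun s st =>
    if s < 0 then PTree.node [] :: st
    else PTree.node (st.take (s.toNat + 1)) :: st.drop (s.toNat + 1)) []

/-- `τ`: the plane tree associated with a Łukasiewicz path. -/
def tau (P : List ℤ) : PTree := (tauStack P).headD (.node [])

mutual
/-- The mirror of a plane tree: reverse the left-to-right order of the children of
every internal node. -/
def mir : PTree → PTree
  | .node ts => .node (mirL ts).reverse
def mirL : List PTree → List PTree
  | [] => []
  | t :: ts => mir t :: mirL ts
end

mutual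
/-- The subtrees rooted at the internal nodes of `T`, in contour-walk (preorder)
order. -/
def internalSubtrees : PTree → List PTree
  | .node [] => []
  | .node (t :: ts) => .node (t :: ts) :: internalSubtreesL (t :: ts)
def internalSubtreesL : List PTree → List PTree
  | [] => []
  | t :: ts => internalSubtrees t ++ internalSubtreesL ts
end

/-- The multiset of degrees of the non-root internal nodes of `T`. -/
def nonRootInternalDegs (T : PTree) : Multiset ℕ :=
  (((internalSubtreesL (children T)).map numChildren : List ℕ) : Multiset ℕ)

/-! ## Lodestars and the lodestar swap -/

/-- A node is a lodestar-type node if it is internal and all its children are leaves. -/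
def isLodestarNode (t : PTree) : Bool :=
  !(children t).isEmpty && (children t).all (fun c => (children c).isEmpty)

mutual
/-- The subtree rooted at the *left lodestar* of `T`: the first internal node, in
contour-walk (preorder) order, all of whose children are leaves (if it exists). -/
def leftLode? : PTree → Option PTree
  | .node ts =>
    if isLodestarNode (.node ts) then some (.node ts) else leftLodeL? ts
def leftLodeL? : List PTree → Option PTree
  | [] => none
  | t :: ts =>
    match leftLode? t with
    | some r => some r
    | none => leftLodeL? ts
end

mutual
/-- The subtree rooted at the *right lodestar* of `T`: the last internal node, in
contour-walk (preorder) order, all of whose children are leaves (if it exists). -/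
def rightLode? : PTree → Option PTree
  | .node ts =>
    match rightLodeL? ts with
    | some r => some r
    | none => if isLodestarNode (.node ts) then some (.node ts) else none
def rightLodeL? : List PTree → Option PTree
  | [] => none
  | t :: ts =>
    match rightLodeL? ts with
    | some r => some r
    | none => rightLode? t
end

mutual
/-- Replace the left lodestar of `T` (first preorder all-leaf-children internal node)
by the tree `r`; `none` if `T` has no internal node. -/
def replF : PTree → PTree → Option PTree
  | r, .node ts =>
    if isLodestarNode (.node ts) then some r
    else (replFL r ts).map PTree.node
def replFL : PTree → List PTree → Option (List PTree)
  | _, [] => none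
  | r, t :: ts =>
    match replF r t with
    | some t' => some (t' :: ts)
    | none => (replFL r ts).map (t :: ·)
end

mutual
/-- Replace the right lodestar of `T` (last preorder all-leaf-children internal node)
by the tree `r`; `none` if `T` has no internal node. -/
def replL : PTree → PTree → Option PTree
  | r, .node ts =>
    match replLL r ts with
    | some ts' => some (.node ts')
    | none => if isLodestarNode (.node ts) then some r else none
def replLL : PTree → List PTree → Option (List PTree)
  | _, [] => none
  | r, t :: ts =>
    match replLL r ts with
    | some ts' => some (t :: ts')
    | none => (replL r t).map (· :: ts)
end

/-- The lodestar swap: exchange the subtrees rooted at the left lodestar and the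
right lodestar of `T` (each a node together with its pendant leaves). -/
def lodeSwap (T : PTree) : PTree :=
  match leftLode? T, rightLode? T with
  | some L, some R => ((replF R T).bind (replL L)).getD T
  | _, _ => T

end Luka

/-! The last internal node in preorder has no internal child (such a child would come after it),
so it is the right lodestar; this holds for every plane tree. Since `τ` lists the internal nodes
in the order of the up-steps, an up-step `U_k` giving a node of degree `k + 1`, the last one
comes from the last up-step. -/

namespace Luka

lemma internalSubtrees_eq_nil_iff {t : PTree} : internalSubtrees t = [] ↔ children t = [] := by
  rcases t with ⟨_ | ⟨_, _⟩⟩ <;> simp [internalSubtrees, children]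

lemma internalSubtreesL_eq_nil_iff {l : List PTree} :
    internalSubtreesL l = [] ↔ ∀ t ∈ l, children t = [] := by
  induction l with
  | nil => simp [internalSubtreesL]
  | cons t ts ih => simp [internalSubtreesL, ih, internalSubtrees_eq_nil_iff]

lemma internalSubtreesL_append (l l' : List PTree) :
    internalSubtreesL (l ++ l') = internalSubtreesL l ++ internalSubtreesL l' := by
  induction l with
  | nil => rfl
  | cons t ts ih => simp [internalSubtreesL, ih]

lemma isLodestarNode_node {l : List PTree} (hl : l ≠ []) :
    isLodestarNode (.node l) = decide (internalSubtreesL l = []) := by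
  rw [Bool.eq_iff_iff]
  simp [isLodestarNode, children, hl, internalSubtreesL_eq_nil_iff, List.isEmpty_iff]

lemma internalSubtrees_node {l : List PTree} (hl : l ≠ []) :
    internalSubtrees (.node l) = [.node l] ++ internalSubtreesL l := by
  cases l with
  | nil => exact absurd rfl hl
  | cons => rfl

lemma rightLode?_node (l : List PTree) :
    rightLode? (.node l) =
      (rightLodeL? l).or (if isLodestarNode (.node l) then some (.node l) else none) := by
  rw [rightLode?]
  cases rightLodeL? l <;> rfl

lemma rightLodeL?_cons (t : PTree) (ts : List PTree) :
    rightLodeL? (t :: ts) = (rightLodeL? ts).or (rightLode? t) := by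
  rw [rightLodeL?]
  cases rightLodeL? ts <;> rfl

mutual

theorem rightLode?_eq_getLast? : ∀ t : PTree, rightLode? t = (internalSubtrees t).getLast?
  | .node [] => by simp [rightLode?_node, rightLodeL?, isLodestarNode, children, internalSubtrees]
  | .node (t :: ts) => by
    have hl : t :: ts ≠ [] := List.cons_ne_nil t ts
    rw [rightLode?_node, rightLodeL?_eq_getLast? (t :: ts), internalSubtrees_node hl,
      List.getLast?_append, isLodestarNode_node hl]
    cases h : (internalSubtreesL (t :: ts)).getLast? with
    | none => simp [List.getLast?_eq_none_iff.1 h]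
    | some r => rfl

theorem rightLodeL?_eq_getLast? :
    ∀ l : List PTree, rightLodeL? l = (internalSubtreesL l).getLast?
  | [] => rfl
  | t :: ts => by
    rw [rightLodeL?_cons, rightLodeL?_eq_getLast? ts, rightLode?_eq_getLast? t,
      internalSubtreesL, List.getLast?_append]

end

/-- Codes of forests: on these `tauStack` never runs short of subtrees. -/
def NegSuffixSums (P : List ℤ) : Prop :=
  (∀ s ∈ P, -1 ≤ s) ∧ ∀ S : List ℤ, S <:+ P → S ≠ [] → S.sum < 0

lemma tauStack_cons (s : ℤ) (P : List ℤ) :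
    tauStack (s :: P) =
      if s < 0 then .node [] :: tauStack P
      else .node ((tauStack P).take (s.toNat + 1)) :: (tauStack P).drop (s.toNat + 1) :=
  rfl

namespace NegSuffixSums

variable {s : ℤ} {P : List ℤ}

lemma tail (h : NegSuffixSums (s :: P)) : NegSuffixSums P :=
  ⟨fun x hx => h.1 x (List.mem_cons_of_mem s hx),
    fun S hS hne => h.2 S (hS.trans (List.suffix_cons s P)) hne⟩

lemma sum_neg (h : NegSuffixSums (s :: P)) : s + P.sum < 0 := by
  simpa using h.2 (s :: P) (List.suffix_refl _) (List.cons_ne_nil s P)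

lemma length_tauStack (h : NegSuffixSums P) : ((tauStack P).length : ℤ) = -P.sum := by
  induction P with
  | nil => rfl
  | cons s P ih =>
    have ih := ih h.tail
    have hs := h.sum_neg
    by_cases hneg : s < 0
    · have : s = -1 := le_antisymm (by omega) (h.1 s List.mem_cons_self)
      rw [tauStack_cons, if_pos hneg, List.length_cons, List.sum_cons]
      omega
    · rw [tauStack_cons, if_neg hneg, List.length_cons, List.length_drop, List.sum_cons]
      omega

lemma map_numChildren_internalSubtreesL_tauStack (h : NegSuffixSums P) :
    (internalSubtreesL (tauStack P)).map numChildren = (upDegs P).map (· + 1) := by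
  induction P with
  | nil => rfl
  | cons s P ih =>
    have ih := ih h.tail
    by_cases hneg : s < 0
    · rw [tauStack_cons, if_pos hneg]
      simpa [internalSubtreesL, internalSubtrees, upDegs, List.filter_cons, hneg] using ih
    · have hlen := h.tail.length_tauStack
      have hs := h.sum_neg
      set st := tauStack P
      have htake : (st.take (s.toNat + 1)).length = s.toNat + 1 := by
        rw [List.length_take]; omega
      have hne : st.take (s.toNat + 1) ≠ [] := List.ne_nil_of_length_pos (by omega)
      rw [tauStack_cons, if_neg hneg, internalSubtreesL, internalSubtrees_node hne,
        List.append_assoc, ← internalSubtreesL_append, List.take_append_drop]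
      simp [ih, upDegs, not_lt.1 hneg, numChildren, children, htake]

end NegSuffixSums

namespace IsLukas

variable {P : List ℤ}

/-- A nonempty suffix of `P` is preceded by a prefix of nonnegative sum, and the total is `-1`. -/
lemma negSuffixSums (hP : IsLukas P) : NegSuffixSums P := by
  refine ⟨hP.2.1, fun S ⟨Q, hQ⟩ hne => ?_⟩
  have hQlen : Q.length < P.length := by
    rw [← hQ, List.length_append]
    have := List.length_pos_iff.2 hne
    omega
  have hQ0 : 0 ≤ Q.sum := by
    simpa [← hQ] using hP.2.2.1 Q.length hQlen
  have : Q.sum + S.sum = -1 := by rw [← List.sum_append, hQ, hP.2.2.2]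
  omega

lemma tauStack_eq (hP : IsLukas P) : tauStack P = [tau P] := by
  have hlen := hP.negSuffixSums.length_tauStack
  rw [hP.2.2.2] at hlen
  obtain ⟨T, hT⟩ := List.length_eq_one_iff.1 (by omega : (tauStack P).length = 1)
  simp [tau, hT]

lemma map_numChildren_internalSubtrees_tau (hP : IsLukas P) :
    (internalSubtrees (tau P)).map numChildren = (upDegs P).map (· + 1) := by
  simpa [hP.tauStack_eq, internalSubtreesL] using
    hP.negSuffixSums.map_numChildren_internalSubtreesL_tauStack

end IsLukas

end Luka

open Luka in
/-- Let `P` be a Łukasiewicz path and `T = τ(P)`.  The right lodestar of `T` is the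
internal node of `T` corresponding to the last up-step of `P` under `τ`, i.e. the last
internal node of `T` in contour-walk (preorder) order; in particular, if the last
up-step of `P` has degree `b`, then the right lodestar of `T` has degree `b + 1`. -/
theorem rightLode_eq_last_internal (P : List ℤ) (hP : IsLukas P) :
    rightLode? (tau P) = (internalSubtrees (tau P)).getLast? ∧
    ∀ b : ℕ, lastUp? P = some b →
      ∃ L : PTree, rightLode? (tau P) = some L ∧ numChildren L = b + 1 := by
  refine ⟨rightLode?_eq_getLast? _, fun b hb => ?_⟩
  have hdegs := congrArg List.getLast? hP.map_numChildren_internalSubtrees_tau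
  rw [List.getLast?_map, List.getLast?_map, ← lastUp?, hb, ← rightLode?_eq_getLast?] at hdegs
  exact Option.map_eq_some_iff.1 hdegs
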